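/- arXiv:2408.07895 — 3 statements merged into one kernel-verified Lean document; each statement's English description precedes it below -/
import Mathlib

section
/- Let R = ℤ[X]/(X⁴ − 1), let α denote the residue class of X, and let I ⊆ R be the ideal generated by α − 1. Fix an integer n ≥ 1. Then the classes of (α−1)¹, (α−1)², …, (α−1)ⁿ generate the image of I in R/I^{n+1} as an abelian group, and an integer combination Σ_{j=1}^{n} c_j·(α−1)^j lies in I^{n+1} if and only if the vector (c₁,…,cₙ) ∈ ℤⁿ lies in the subgroup generated by the n vectors r_k := Σ_{i=1}^{4} C(4,i)·e_{k+i}, k = 0,1,…,n−1 (where e₁,…,eₙ is the standard basis of ℤⁿ and e_m is interpreted as 0 for m > n). Equivalently, the additive group I/I^{n+1} is isomorphic to ℤⁿ/⟨r₀,…,r_{n−1}⟩ via e_j ↦ (α−1)^j. -/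
open Polynomial

/-- The ring `R = ℤ[X]/(X⁴ − 1)`, the complex representation ring of `ℤ/4`. -/
abbrev RepRingC4 : Type := ℤ[X] ⧸ Ideal.span ({X ^ 4 - 1} : Set ℤ[X])

/-- `α`, the residue class of `X` in `ℤ[X]/(X⁴ − 1)`. -/
noncomputable def alphaC4 : RepRingC4 :=
  Ideal.Quotient.mk (Ideal.span ({X ^ 4 - 1} : Set ℤ[X])) X

/-- The augmentation ideal `I = (α − 1) ⊆ R`. -/
noncomputable def augIdealC4 : Ideal RepRingC4 := Ideal.span {alphaC4 - 1}

/-- The relation vector `r_k = Σ_{i=1}^{4} C(4,i)·e_{k+i} ∈ ℤⁿ` (with `1`-indexed standard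
basis vectors `e₁, …, eₙ`, and `e_m = 0` for `m > n`); here the coordinate indexed by
`j : Fin n` corresponds to `e_{j+1}`. -/
def relVecC4 (n : ℕ) (k : Fin n) : Fin n → ℤ := fun j =>
  if (k : ℕ) < (j : ℕ) + 1 ∧ (j : ℕ) + 1 ≤ (k : ℕ) + 4 then
    (Nat.choose 4 ((j : ℕ) + 1 - (k : ℕ)) : ℤ)
  else 0

namespace AugC4Aux
set_option maxHeartbeats 1000000
set_option synthInstance.maxHeartbeats 200000

open Ideal

noncomputable def mkR : ℤ[X] →+* RepRingC4 :=
  Ideal.Quotient.mk (Ideal.span ({X ^ 4 - 1} : Set ℤ[X]))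

noncomputable def qq : ℤ[X] := X ^ 4 + C 4 * X ^ 3 + C 6 * X ^ 2 + C 4 * X

lemma qq_eq : ((X + 1 : ℤ[X]) ^ 4 - 1) = qq := by simp only [qq, map_ofNat]; ring

lemma coeff_qq (m : ℕ) :
    qq.coeff m = if 1 ≤ m ∧ m ≤ 4 then ((Nat.choose 4 m : ℤ)) else 0 := by
  match m with
  | 0 => simp [qq, coeff_X_pow, coeff_X]
  | 1 => simp [qq, coeff_X_pow, coeff_X]
  | 2 => simp [qq, coeff_X_pow, coeff_X]; norm_num [Nat.choose]
  | 3 => simp [qq, coeff_X_pow, coeff_X]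
  | 4 => simp [qq, coeff_X_pow, coeff_X]
  | (m+5) => simp [qq, coeff_X_pow, coeff_X]

lemma coeff_qq_zero : qq.coeff 0 = 0 := by simp [coeff_qq]

/-- the shift automorphism `p(X) ↦ p(X+1)` -/
noncomputable def sh : ℤ[X] ≃ₐ[ℤ] ℤ[X] := Polynomial.algEquivAevalXAddC 1

lemma sh_Xsub1 : sh (X - 1) = X := by simp [sh, algEquivAevalXAddC]

lemma sh_X4sub1 : sh (X ^ 4 - 1) = qq := by
  rw [← qq_eq]; simp [sh, algEquivAevalXAddC]

lemma coeff_Xpow_mul_qq (k m : ℕ) :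
    (X ^ k * qq).coeff m =
      if k < m ∧ m ≤ k + 4 then ((Nat.choose 4 (m - k) : ℤ)) else 0 := by
  rw [mul_comm, coeff_mul_X_pow']
  rcases le_or_gt k m with h | h
  · rw [if_pos h, coeff_qq]
    by_cases h2 : k < m ∧ m ≤ k + 4
    · rw [if_pos (by omega), if_pos h2]
    · rw [if_neg (by omega), if_neg h2]
  · rw [if_neg (by omega), if_neg (by omega)]

variable (n : ℕ)

/-- truncation: coefficients in degrees `1..n` -/
def trunc : ℤ[X] →+ (Fin n → ℤ) where
  toFun f := fun j => f.coeff ((j : ℕ) + 1)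
  map_zero' := by funext j; simp
  map_add' f g := by funext j; simp

@[simp] lemma trunc_apply (f : ℤ[X]) (j : Fin n) :
    trunc n f j = f.coeff ((j : ℕ) + 1) := rfl

/-- the combination map `c ↦ Σ c_j X^(j+1)` -/
noncomputable def phi : (Fin n → ℤ) →+ ℤ[X] where
  toFun c := ∑ j : Fin n, c j • X ^ ((j : ℕ) + 1)
  map_zero' := by simp
  map_add' c d := by
    simp only [Pi.add_apply, add_smul, Finset.sum_add_distrib]

@[simp] lemma phi_apply (c : Fin n → ℤ) :
    phi n c = ∑ j : Fin n, c j • X ^ ((j : ℕ) + 1) := rfl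

lemma trunc_phi (c : Fin n → ℤ) : trunc n (phi n c) = c := by
  funext j
  rw [trunc_apply, phi_apply, finset_sum_coeff]
  rw [Finset.sum_eq_single j]
  · simp [coeff_X_pow]
  · intro i _ hij
    have hne : (j : ℕ) ≠ (i : ℕ) := fun h => hij (Fin.ext h.symm)
    simp [coeff_X_pow, hne]
  · simp

lemma trunc_Xpow_mul_qq (k : Fin n) :
    trunc n (X ^ (k : ℕ) * qq) = relVecC4 n k := by
  funext j
  rw [trunc_apply, coeff_Xpow_mul_qq]
  simp only [relVecC4]

lemma trunc_Xpow_mul_qq_ge (k : ℕ) (hk : n ≤ k) : trunc n (X ^ k * qq) = 0 := by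
  funext j
  rw [trunc_apply, coeff_Xpow_mul_qq, if_neg (by omega)]
  rfl

/-- the key truncation lemma -/
lemma truncation (f : ℤ[X]) (hf : f.coeff 0 = 0) :
    X ^ (n + 1) ∣ f - phi n (trunc n f) := by
  rw [X_pow_dvd_iff]
  intro d hd
  rw [coeff_sub, phi_apply]
  match d, hd with
  | 0, _ => simp [hf, coeff_X_pow, finset_sum_coeff]
  | (d+1), hd =>
    rw [finset_sum_coeff, Finset.sum_eq_single (⟨d, by omega⟩ : Fin n)]
    · simp [coeff_X_pow]
    · intro i _ hij
      have hne : d ≠ (i : ℕ) := fun h => hij (Fin.ext h.symm)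
      simp [coeff_X_pow, hne]
    · simp

/-- the shifted ideal -/
noncomputable def Jn : Ideal ℤ[X] := Ideal.span ({X ^ (n + 1), qq} : Set ℤ[X])

noncomputable def Hn : AddSubgroup (Fin n → ℤ) :=
  AddSubgroup.closure (Set.range (relVecC4 n))

lemma trunc_mul_qq_mem (u : ℤ[X]) : trunc n (u * qq) ∈ Hn n := by
  induction u using Polynomial.induction_on' with
  | add p r hp hr => rw [add_mul, map_add]; exact add_mem hp hr
  | monomial k a =>
    rw [← C_mul_X_pow_eq_monomial, mul_assoc]
    have h : trunc n (C a * (X ^ k * qq)) = a • trunc n (X ^ k * qq) := by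
      funext j; simp [coeff_C_mul]
    rw [h]
    rcases lt_or_ge k n with hk | hk
    · rw [show k = ((⟨k, hk⟩ : Fin n) : ℕ) from rfl, trunc_Xpow_mul_qq]
      exact AddSubgroup.zsmul_mem _ (AddSubgroup.subset_closure (Set.mem_range_self _)) a
    · rw [trunc_Xpow_mul_qq_ge n k hk, smul_zero]
      exact zero_mem _

lemma trunc_mul_Xpow (v : ℤ[X]) : trunc n (v * X ^ (n + 1)) = 0 := by
  funext j
  rw [trunc_apply, coeff_mul_X_pow', if_neg (by omega)]
  rfl

/-- core: membership in the shifted ideal vs the relation subgroup -/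
lemma core (c : Fin n → ℤ) : phi n c ∈ Jn n ↔ c ∈ Hn n := by
  constructor
  · intro h
    obtain ⟨u, v, huv⟩ := Ideal.mem_span_pair.1 h
    have : c = trunc n (u * X ^ (n + 1)) + trunc n (v * qq) := by
      rw [← map_add, huv, trunc_phi]
    rw [this, trunc_mul_Xpow, zero_add]
    exact trunc_mul_qq_mem n v
  · intro h
    refine AddSubgroup.closure_induction ?_ (by simp) ?_ ?_ h
    · rintro _ ⟨k, rfl⟩
      rw [← trunc_Xpow_mul_qq]
      have h1 : X ^ (k : ℕ) * qq ∈ Jn n :=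
        Ideal.mul_mem_left _ _ (Ideal.subset_span (by simp))
      have hle : Ideal.span ({X ^ (n + 1)} : Set ℤ[X]) ≤ Jn n :=
        Ideal.span_mono (by simp [Jn])
      have h2 : X ^ (k : ℕ) * qq - phi n (trunc n (X ^ (k : ℕ) * qq)) ∈ Jn n :=
        hle (Ideal.mem_span_singleton.2
          (truncation n _ (by rw [coeff_Xpow_mul_qq]; simp)))
      have := sub_mem h1 h2
      simpa using this
    · intro x y _ _ hx hy
      rw [map_add]; exact add_mem hx hy
    · intro x _ hx
      rw [map_neg]; exact neg_mem hx

lemma alpha_sub_one : alphaC4 - 1 = mkR (X - 1) := by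
  rw [alphaC4, mkR, map_sub, map_one]

/-- transfer along an algebra automorphism -/
lemma mem_span_pair_equiv (σ : ℤ[X] ≃ₐ[ℤ] ℤ[X]) (a b x : ℤ[X]) :
    x ∈ Ideal.span ({a, b} : Set ℤ[X]) ↔
      σ x ∈ Ideal.span ({σ a, σ b} : Set ℤ[X]) := by
  have fwd : ∀ (τ : ℤ[X] ≃ₐ[ℤ] ℤ[X]) (a b x : ℤ[X]),
      x ∈ Ideal.span ({a, b} : Set ℤ[X]) →
        τ x ∈ Ideal.span ({τ a, τ b} : Set ℤ[X]) := by
    intro τ a b x hx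
    obtain ⟨u, v, huv⟩ := Ideal.mem_span_pair.1 hx
    exact Ideal.mem_span_pair.2 ⟨τ u, τ v, by
      rw [← _root_.map_mul, ← _root_.map_mul, ← map_add, huv]⟩
  refine ⟨fwd σ a b x, fun h => ?_⟩
  have := fwd σ.symm _ _ _ h
  simpa using this

/-- bridge: membership of `mkR f` in `I^(n+1)` -/
lemma bridge (f : ℤ[X]) :
    mkR f ∈ augIdealC4 ^ (n + 1) ↔ sh f ∈ Jn n := by
  have h1 : augIdealC4 ^ (n + 1) =
      Ideal.map mkR (Ideal.span {(X - 1) ^ (n + 1)}) := by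
    rw [augIdealC4, alpha_sub_one, Ideal.span_singleton_pow, Ideal.map_span,
      Set.image_singleton, map_pow]
  rw [h1, mkR, Ideal.mem_quotient_iff_mem_sup, ← Ideal.span_union,
    Set.singleton_union, Jn,
    mem_span_pair_equiv sh, map_pow, sh_Xsub1, sh_X4sub1]

noncomputable def tt : RepRingC4 := alphaC4 - 1

lemma sum_eq_mkR (c : Fin n → ℤ) :
    (∑ j : Fin n, c j • (alphaC4 - 1) ^ ((j : ℕ) + 1)) =
      mkR (∑ j : Fin n, c j • (X - 1) ^ ((j : ℕ) + 1)) := by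
  rw [map_sum]
  exact Finset.sum_congr rfl fun j _ => by
    rw [map_zsmul, map_pow, alpha_sub_one]

lemma sh_sum (c : Fin n → ℤ) :
    sh (∑ j : Fin n, c j • (X - 1) ^ ((j : ℕ) + 1)) = phi n c := by
  rw [map_sum, phi_apply]
  exact Finset.sum_congr rfl fun j _ => by
    rw [map_zsmul, map_pow, sh_Xsub1]

/-- Part 2 -/
lemma part2 (c : Fin n → ℤ) :
    (∑ j : Fin n, c j • (alphaC4 - 1) ^ ((j : ℕ) + 1)) ∈ augIdealC4 ^ (n + 1) ↔
      c ∈ AddSubgroup.closure (Set.range (relVecC4 n)) := by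
  rw [sum_eq_mkR, bridge, sh_sum]
  exact core n c

lemma gen_mem (j : Fin n) :
    Ideal.Quotient.mk (augIdealC4 ^ (n + 1)) ((alphaC4 - 1) ^ ((j : ℕ) + 1)) ∈
      augIdealC4.map (Ideal.Quotient.mk (augIdealC4 ^ (n + 1))) := by
  refine Ideal.mem_map_of_mem _ ?_
  rw [augIdealC4]
  exact Ideal.pow_mem_of_mem _ (Ideal.mem_span_singleton_self _) _ (Nat.succ_pos _)

lemma reduce (f : ℤ[X]) (hf : (sh f).coeff 0 = 0) :
    Ideal.Quotient.mk (augIdealC4 ^ (n + 1)) (mkR f) =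
      ∑ j : Fin n, (trunc n (sh f)) j •
        Ideal.Quotient.mk (augIdealC4 ^ (n + 1)) ((alphaC4 - 1) ^ ((j : ℕ) + 1)) := by
  set a := trunc n (sh f) with ha
  have hd : mkR (f - ∑ j : Fin n, a j • (X - 1) ^ ((j : ℕ) + 1)) ∈
      augIdealC4 ^ (n + 1) := by
    rw [bridge]
    have hsh : sh (f - ∑ j : Fin n, a j • (X - 1) ^ ((j : ℕ) + 1)) = sh f - phi n a := by
      rw [map_sub, sh_sum]
    rw [hsh]
    have hle : Ideal.span ({X ^ (n + 1)} : Set ℤ[X]) ≤ Jn n :=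
      Ideal.span_mono (by simp [Jn])
    exact hle (Ideal.mem_span_singleton.2 (truncation n _ hf))
  have h0 : Ideal.Quotient.mk (augIdealC4 ^ (n + 1))
      (mkR f - mkR (∑ j : Fin n, a j • (X - 1) ^ ((j : ℕ) + 1))) = 0 := by
    rw [← map_sub]
    exact Ideal.Quotient.eq_zero_iff_mem.2 hd
  rw [map_sub, sub_eq_zero] at h0
  rw [h0, ← sum_eq_mkR n a, map_sum]
  exact Finset.sum_congr rfl fun j _ => by rw [map_zsmul]

lemma exists_rep (x : RepRingC4 ⧸ augIdealC4 ^ (n + 1))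
    (hx : x ∈ augIdealC4.map (Ideal.Quotient.mk (augIdealC4 ^ (n + 1)))) :
    ∃ c : Fin n → ℤ,
      (∑ j : Fin n, c j •
        Ideal.Quotient.mk (augIdealC4 ^ (n + 1)) ((alphaC4 - 1) ^ ((j : ℕ) + 1))) = x := by
  obtain ⟨z, hz, rfl⟩ :=
    (Ideal.mem_map_iff_of_surjective _ Ideal.Quotient.mk_surjective).1 hx
  obtain ⟨w, hw⟩ := Ideal.mem_span_singleton'.1 hz
  obtain ⟨g, rfl⟩ := Ideal.Quotient.mk_surjective w
  have hz' : z = mkR (g * (X - 1)) := by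
    rw [← hw, _root_.map_mul, alpha_sub_one]
    rfl
  have hf : (sh (g * (X - 1))).coeff 0 = 0 := by
    rw [← X_dvd_iff, _root_.map_mul, sh_Xsub1]
    exact dvd_mul_left _ _
  exact ⟨trunc n (sh (g * (X - 1))), by rw [hz', reduce n _ hf]⟩

lemma mem_closure_of_mem_map (x : RepRingC4 ⧸ augIdealC4 ^ (n + 1))
    (hx : x ∈ augIdealC4.map (Ideal.Quotient.mk (augIdealC4 ^ (n + 1)))) :
    x ∈ AddSubgroup.closure
      (Set.range fun j : Fin n =>
        Ideal.Quotient.mk (augIdealC4 ^ (n + 1)) ((alphaC4 - 1) ^ ((j : ℕ) + 1))) := by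
  obtain ⟨c, hc⟩ := exists_rep n x hx
  rw [← hc]
  exact sum_mem fun j _ =>
    AddSubgroup.zsmul_mem _ (AddSubgroup.subset_closure (Set.mem_range_self _)) _

lemma part1 :
    AddSubgroup.closure
        (Set.range fun j : Fin n =>
          Ideal.Quotient.mk (augIdealC4 ^ (n + 1)) ((alphaC4 - 1) ^ ((j : ℕ) + 1))) =
      (augIdealC4.map (Ideal.Quotient.mk (augIdealC4 ^ (n + 1)))).toAddSubgroup := by
  refine le_antisymm (AddSubgroup.closure_le _ |>.2 ?_) (fun x hx => mem_closure_of_mem_map n x hx)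
  rintro _ ⟨j, rfl⟩
  exact gen_mem n j

lemma sum_pi_single (j : Fin n) :
    (∑ i : Fin n, (Pi.single j (1 : ℤ) : Fin n → ℤ) i •
        Ideal.Quotient.mk (augIdealC4 ^ (n + 1)) ((alphaC4 - 1) ^ ((i : ℕ) + 1))) =
      Ideal.Quotient.mk (augIdealC4 ^ (n + 1)) ((alphaC4 - 1) ^ ((j : ℕ) + 1)) := by
  rw [Finset.sum_eq_single j]
  · simp
  · intro i _ hij
    rw [Pi.single_eq_of_ne hij, zero_smul]
  · simp

noncomputable def F0 : (Fin n → ℤ) →+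
    (augIdealC4.map (Ideal.Quotient.mk (augIdealC4 ^ (n + 1)))) where
  toFun c := ⟨∑ j : Fin n, c j •
      Ideal.Quotient.mk (augIdealC4 ^ (n + 1)) ((alphaC4 - 1) ^ ((j : ℕ) + 1)),
    sum_mem fun j _ => zsmul_mem (gen_mem n j) _⟩
  map_zero' := by
    apply Subtype.ext
    simp
  map_add' c d := by
    apply Subtype.ext
    simp [add_smul, Finset.sum_add_distrib]

lemma F0_apply (c : Fin n → ℤ) :
    (F0 n c : RepRingC4 ⧸ augIdealC4 ^ (n + 1)) =
      ∑ j : Fin n, c j •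
        Ideal.Quotient.mk (augIdealC4 ^ (n + 1)) ((alphaC4 - 1) ^ ((j : ℕ) + 1)) := rfl

lemma F0_surjective : Function.Surjective (F0 n) := by
  rintro ⟨x, hx⟩
  obtain ⟨c, hc⟩ := exists_rep n x hx
  exact ⟨c, Subtype.ext hc⟩

lemma F0_ker : (F0 n).ker = Hn n := by
  ext c
  rw [AddMonoidHom.mem_ker]
  rw [Subtype.ext_iff]
  rw [F0_apply]
  have : (∑ j : Fin n, c j •
      Ideal.Quotient.mk (augIdealC4 ^ (n + 1)) ((alphaC4 - 1) ^ ((j : ℕ) + 1))) =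
      Ideal.Quotient.mk (augIdealC4 ^ (n + 1))
        (∑ j : Fin n, c j • (alphaC4 - 1) ^ ((j : ℕ) + 1)) := by
    rw [map_sum]
    exact Finset.sum_congr rfl fun j _ => by rw [map_zsmul]
  rw [this]
  show _ = (0 : RepRingC4 ⧸ augIdealC4 ^ (n + 1)) ↔ _
  rw [Ideal.Quotient.eq_zero_iff_mem]
  exact part2 n c

end AugC4Aux

set_option maxHeartbeats 2000000
set_option synthInstance.maxHeartbeats 1000000
set_option linter.unusedVariables false

/-- For `n ≥ 1`: the classes of `(α−1)¹, …, (α−1)ⁿ` generate the image of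
`I` in `R/I^{n+1}` as an abelian group; an integral combination `Σ c_j (α−1)^j` lies in
`I^{n+1}` iff `(c₁, …, cₙ)` lies in the subgroup of `ℤⁿ` generated by the vectors
`r₀, …, r_{n−1}`; and, equivalently, `e_j ↦ (α−1)^j` induces an isomorphism of
`ℤⁿ/⟨r₀, …, r_{n−1}⟩` with the additive group `I/I^{n+1}`. -/
theorem augIdeal_quotient_presentation (n : ℕ) (hn : 1 ≤ n) :
    (AddSubgroup.closure
        (Set.range fun j : Fin n =>
          Ideal.Quotient.mk (augIdealC4 ^ (n + 1)) ((alphaC4 - 1) ^ ((j : ℕ) + 1))) =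
      (augIdealC4.map (Ideal.Quotient.mk (augIdealC4 ^ (n + 1)))).toAddSubgroup) ∧
    (∀ c : Fin n → ℤ,
      (∑ j : Fin n, c j • (alphaC4 - 1) ^ ((j : ℕ) + 1)) ∈ augIdealC4 ^ (n + 1) ↔
        c ∈ AddSubgroup.closure (Set.range (relVecC4 n))) ∧
    (∃ e : ((Fin n → ℤ) ⧸ AddSubgroup.closure (Set.range (relVecC4 n))) ≃+
        (augIdealC4.map (Ideal.Quotient.mk (augIdealC4 ^ (n + 1)))),
      ∀ j : Fin n,
        (e (QuotientAddGroup.mk (Pi.single j 1)) : RepRingC4 ⧸ augIdealC4 ^ (n + 1)) =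
          Ideal.Quotient.mk (augIdealC4 ^ (n + 1)) ((alphaC4 - 1) ^ ((j : ℕ) + 1))) := by
  refine ⟨AugC4Aux.part1 n, AugC4Aux.part2 n, ?_⟩
  refine ⟨(QuotientAddGroup.quotientAddEquivOfEq (AugC4Aux.F0_ker n).symm).trans
    (QuotientAddGroup.quotientKerEquivOfSurjective (AugC4Aux.F0 n)
      (AugC4Aux.F0_surjective n)), ?_⟩
  intro j
  have h2 : ((QuotientAddGroup.quotientAddEquivOfEq (AugC4Aux.F0_ker n).symm).trans
      (QuotientAddGroup.quotientKerEquivOfSurjective (AugC4Aux.F0 n)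
        (AugC4Aux.F0_surjective n))) (QuotientAddGroup.mk (Pi.single j 1)) =
      AugC4Aux.F0 n (Pi.single j 1) := rfl
  exact (congrArg Subtype.val h2).trans
    ((AugC4Aux.F0_apply n _).trans (AugC4Aux.sum_pi_single n j))
end

section
/- Let R = ℤ[X]/(X⁴ − 1), let α denote the residue class of X, and let I ⊆ R be the ideal generated by α − 1. Then for every integer n ≥ 1, the additive group I/I^{n+1} (equivalently, the image of I in R/I^{n+1}) is finite of cardinality 4ⁿ. -/
/-!
Pulling back along `ℤ[X] → R`, the ring `R/I^{n+1}` is `ℤ[X]/((X-1)^{n+1}, X⁴-1)` and the image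
of `I` is the principal ideal of `X - 1` there. Since `X⁴ - 1 = (X - 1) h` with
`h = X³ + X² + X + 1` and `X - 1` is a non-zero-divisor, multiplication by `X - 1` identifies
this image with `ℤ[X]/((X-1)^n, h)`. As `X - 1` is prime and does not divide `h`, the filtration
by powers of `X - 1` has `n` layers, each isomorphic to `ℤ[X]/(X-1, h) ≅ ℤ/h(1) = ℤ/4`.
-/

open Polynomial

namespace Ideal

variable {A : Type*} [CommRing A]

theorem natCard_map_span_singleton {B : Type*} [Ring B] {f : A →+* B}
    (hf : Function.Surjective f) (y : A) :
    Nat.card ((span {y}).map f) = Nat.card (A ⧸ (RingHom.ker f).colon {y}) := by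
  let := f.toAlgebra' fun c x => by
    obtain ⟨a, rfl⟩ := hf x
    rw [← map_mul, mul_comm, map_mul]
  let φ : A →ₗ[A] B := LinearMap.toSpanSingleton A B (f y)
  have hrange : ((span {y}).map f).restrictScalars A = LinearMap.range φ := by
    rw [map_span, Set.image_singleton, LinearMap.range_toSpanSingleton]
    exact Submodule.restrictScalars_span A B hf _
  have hker : LinearMap.ker φ = (RingHom.ker f).colon {y} := by
    ext p
    simp only [φ, LinearMap.mem_ker, LinearMap.toSpanSingleton_apply,
      Submodule.mem_colon_singleton, smul_eq_mul, RingHom.mem_ker, map_mul]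
    rfl
  calc Nat.card ((span {y}).map f)
      = Nat.card (((span {y}).map f).restrictScalars A) := rfl
    _ = Nat.card (A ⧸ LinearMap.ker φ) := by
        rw [hrange]; exact Nat.card_congr (LinearMap.quotKerEquivRange φ).toEquiv.symm
    _ = Nat.card (A ⧸ (RingHom.ker f).colon {y}) := by rw [hker]

variable [IsDomain A]

theorem colon_span_pair_mul_left {y : A} (hy : y ≠ 0) (a b : A) :
    (span {y * a, y * b}).colon {y} = span {a, b} := by
  ext p
  simp only [Submodule.mem_colon_singleton, smul_eq_mul, mem_span_pair]
  refine exists₂_congr fun c d => ⟨fun h => mul_left_cancel₀ hy ?_, fun h => ?_⟩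
  · linear_combination h
  · linear_combination y * h

theorem colon_span_pair_pow_succ {y f : A} (hy : Prime y) (hf : ¬ y ∣ f) (k : ℕ) :
    (span {y ^ (k + 1), f}).colon {y ^ k} = span {y, f} := by
  ext p
  simp only [Submodule.mem_colon_singleton, smul_eq_mul, mem_span_pair]
  constructor
  · rintro ⟨a, b, hab⟩
    obtain ⟨c, rfl⟩ : y ^ k ∣ b :=
      hy.pow_dvd_of_dvd_mul_right k hf ⟨p - a * y, by linear_combination hab⟩
    exact ⟨a, c, mul_left_cancel₀ (pow_ne_zero k hy.ne_zero) (by linear_combination hab)⟩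
  · rintro ⟨a, b, hab⟩
    exact ⟨a, b * y ^ k, by linear_combination y ^ k * hab⟩

theorem natCard_quotient_span_pow_pair {y f : A} (hy : Prime y) (hf : ¬ y ∣ f) (n : ℕ) :
    Nat.card (A ⧸ span {y ^ n, f}) = Nat.card (A ⧸ span {y, f}) ^ n := by
  induction n with
  | zero =>
    rw [pow_zero, pow_zero, span_insert, span_singleton_one, top_sup_eq]
    exact Nat.card_unique
  | succ k ih =>
    have hle : span {y ^ (k + 1), f} ≤ span {y ^ k, f} :=
      span_le.mpr <| Set.insert_subset
        (mem_span_pair.mpr ⟨y, 0, by ring⟩) (Set.singleton_subset_iff.mpr (subset_span (by simp)))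
    have hgraded : (span {y ^ k, f}).map (Quotient.mk (span {y ^ (k + 1), f}))
        = (span {y ^ k}).map (Quotient.mk (span {y ^ (k + 1), f})) := by
      have hf0 : Quotient.mk (span {y ^ (k + 1), f}) f = 0 :=
        Quotient.eq_zero_iff_mem.mpr (mem_span_pair.mpr ⟨0, 1, by ring⟩)
      rw [map_span, map_span, Set.image_pair, Set.image_singleton, hf0, span_pair_zero]
    have hlayer : Nat.card ((span {y ^ k, f}).map (Quotient.mk (span {y ^ (k + 1), f})))
        = Nat.card (A ⧸ span {y, f}) := by
      rw [hgraded, natCard_map_span_singleton Quotient.mk_surjective, mk_ker,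
        colon_span_pair_pow_succ hy hf]
    rw [map_eq_submodule_map] at hlayer
    rw [← Submodule.card_quotient_mul_card_quotient _ _ hle, ih,
      pow_succ' (Nat.card (A ⧸ span {y, f}))]
    exact congrArg (· * _) hlayer

end Ideal

theorem Polynomial.natCard_quotient_span_X_sub_C_pair {R : Type*} [CommRing R] (a : R)
    (p : R[X]) :
    Nat.card (R[X] ⧸ Ideal.span {X - C a, p}) = Nat.card (R ⧸ Ideal.span {p.eval a}) := by
  have hspan : Ideal.span {X - C a, p} = Ideal.span {C (p.eval a), X - C a} := by
    conv_lhs => rw [Set.pair_comm, ← modByMonic_add_div p (X - C a),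
      modByMonic_X_sub_C_eq_C_eval, mul_comm, Ideal.span_pair_add_mul_right]
  rw [hspan]
  exact Nat.card_congr (quotientSpanCXSubCAlgEquiv (p.eval a) a).toEquiv

theorem card_augIdeal_quotient_general (n : ℕ) :
    Nat.card
      (augIdealC4.map (Ideal.Quotient.mk (augIdealC4 ^ (n + 1)))) = 4 ^ n := by
  let I₀ : Ideal ℤ[X] := Ideal.span {X ^ 4 - 1}
  have haug : augIdealC4 = (Ideal.span {X - C 1}).map (Ideal.Quotient.mk I₀) := by
    rw [Ideal.map_span, Set.image_singleton, map_sub, C_1, map_one]; rfl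
  let θ := (Ideal.Quotient.mk (augIdealC4 ^ (n + 1))).comp (Ideal.Quotient.mk I₀)
  have hsurj : Function.Surjective θ :=
    Ideal.Quotient.mk_surjective.comp Ideal.Quotient.mk_surjective
  have hker : RingHom.ker θ
      = Ideal.span {(X - C 1) * (X ^ 3 + X ^ 2 + X + 1), (X - C 1) * (X - C 1) ^ n} := by
    rw [← RingHom.comap_ker, Ideal.mk_ker, haug, ← Ideal.map_pow, Ideal.span_singleton_pow,
      Ideal.comap_map_of_surjective _ Ideal.Quotient.mk_surjective, ← RingHom.ker, Ideal.mk_ker,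
      sup_comm, ← Ideal.span_insert, C_1]
    congr 3 <;> ring
  have hmap : augIdealC4.map (Ideal.Quotient.mk (augIdealC4 ^ (n + 1)))
      = (Ideal.span {X - C 1}).map θ := by
    rw [← Ideal.map_map, ← haug]
  have hndvd : ¬ (X - C 1) ∣ (X ^ 3 + X ^ 2 + X + 1 : ℤ[X]) := by
    rw [dvd_iff_isRoot]; norm_num
  rw [hmap, Ideal.natCard_map_span_singleton hsurj, hker,
    Ideal.colon_span_pair_mul_left (X_sub_C_ne_zero 1), Set.pair_comm,
    Ideal.natCard_quotient_span_pow_pair (prime_X_sub_C 1) hndvd,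
    Polynomial.natCard_quotient_span_X_sub_C_pair]
  norm_num [Nat.card_congr (Int.quotientSpanEquivZMod 4).toEquiv]

/-- For every `n ≥ 1`, the additive group `I/I^{n+1}`, i.e. the image of
`I` in `R/I^{n+1}`, is finite of cardinality `4ⁿ`. -/
theorem card_augIdeal_quotient (n : ℕ) (hn : 1 ≤ n) :
    Nat.card
      (augIdealC4.map (Ideal.Quotient.mk (augIdealC4 ^ (n + 1)))) = 4 ^ n :=
  card_augIdeal_quotient_general n
end

section
/- Let δ : ℤ/4 → ℤ/4 × ℤ/4 be the diagonal group homomorphism k ↦ (k, k). Then for every natural number n, the induced homomorphism δ_* : H_{2n+1}(ℤ/4; ℤ) → H_{2n+1}(ℤ/4 × ℤ/4; ℤ) on integral group homology in odd degrees is injective. -/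
open CategoryTheory

namespace InhomogeneousChains

variable (k G : Type) [CommRing k] [Group G]

/-- The differential in the complex of inhomogeneous chains computing the group homology
of `G` with trivial coefficients `k`. -/
noncomputable def d (n : ℕ) : ((Fin (n + 1) → G) →₀ k) →ₗ[k] ((Fin n → G) →₀ k) :=
  Finsupp.lift _ k _ fun g =>
    Finsupp.single (fun i => g i.succ) (1 : k) +
      ∑ j : Fin (n + 1), ((-1 : k) ^ ((j : ℕ) + 1)) •
        Finsupp.single (Fin.contractNth j (· * ·) g) (1 : k)

variable {M : Type} [AddCommGroup M] [Module k M]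

lemma lift_single_one {X : Type} (f : X → M) (x : X) :
    Finsupp.lift M k X f (Finsupp.single x 1) = f x := by
  rw [Finsupp.lift_apply, Finsupp.sum_single_index (by simp), one_smul]

lemma d_single (n : ℕ) (g : Fin (n + 1) → G) :
    d k G n (Finsupp.single g 1) =
      Finsupp.single (fun i => g i.succ) (1 : k) +
        ∑ j : Fin (n + 1), ((-1 : k) ^ ((j : ℕ) + 1)) •
          Finsupp.single (Fin.contractNth j (· * ·) g) (1 : k) :=
  lift_single_one k _ _

/-- Pairing the inhomogeneous chains with a function `f : Gⁿ → M` intertwines the chain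
differential with the inhomogeneous cochain differential of the trivial representation. -/
lemma lift_comp_d (n : ℕ) (f : (Fin n → G) → M) :
    (Finsupp.lift M k (Fin n → G) f).comp (d k G n) =
      Finsupp.lift M k (Fin (n + 1) → G)
        ((inhomogeneousCochains.d (Rep.trivial k G M) n).hom f) := by
  apply Finsupp.lhom_ext
  intro g b
  have hb : (Finsupp.single g b : (Fin (n + 1) → G) →₀ k) = b • Finsupp.single g 1 := by
    rw [Finsupp.smul_single, smul_eq_mul, mul_one]
  rw [LinearMap.comp_apply, hb, map_smul, map_smul, map_smul]
  congr 1
  rw [d_single, lift_single_one, map_add, map_sum, lift_single_one]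
  rw [inhomogeneousCochains.d_hom_apply]
  congr 1
  refine Finset.sum_congr rfl fun j _ => ?_
  rw [map_smul, lift_single_one]

lemma d_comp_d (n : ℕ) : (d k G n).comp (d k G (n + 1)) = 0 := by
  have hid : Finsupp.lift ((Fin n → G) →₀ k) k (Fin n → G)
      (fun g => Finsupp.single g 1) = LinearMap.id := by
    apply Finsupp.lhom_ext
    intro a b
    simp [Finsupp.lift_apply, Finsupp.sum_single_index, Finsupp.smul_single]
  have h0 : ((Finsupp.lift ((Fin n → G) →₀ k) k (Fin n → G)
      (fun g => Finsupp.single g 1)).comp (d k G n)).comp (d k G (n + 1)) =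
      (d k G n).comp (d k G (n + 1)) := by
    rw [hid, LinearMap.id_comp]
  rw [← h0, lift_comp_d, lift_comp_d]
  have hdd : (inhomogeneousCochains.d (Rep.trivial k G ((Fin n → G) →₀ k)) (n + 1)).hom
      ((inhomogeneousCochains.d (Rep.trivial k G ((Fin n → G) →₀ k)) n).hom
        (fun g => Finsupp.single g 1)) = 0 := by
    have := groupCohomology.inhomogeneousCochains.d_comp_d n
      (Rep.trivial k G ((Fin n → G) →₀ k))
    exact LinearMap.congr_fun (congrArg ModuleCat.Hom.hom this) _
  rw [hdd]
  exact map_zero _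

/-- The complex of inhomogeneous chains of `G` with trivial coefficients in `k`. -/
noncomputable def chainsComplex : ChainComplex (ModuleCat k) ℕ :=
  ChainComplex.of (fun n => ModuleCat.of k ((Fin n → G) →₀ k)) (fun n => ModuleCat.ofHom (d k G n))
    (fun n => by
      ext : 1
      exact d_comp_d k G n)

lemma chainsComplex_d (n : ℕ) : (chainsComplex k G).d (n + 1) n = ModuleCat.ofHom (d k G n) :=
  ChainComplex.of_d (fun n => ModuleCat.of k ((Fin n → G) →₀ k))
    (fun n => ModuleCat.ofHom (d k G n)) n

variable {G} {H : Type} [Group H]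

lemma comp_contractNth {n : ℕ} (φ : G →* H) (j : Fin (n + 1)) (g : Fin (n + 1) → G) :
    φ ∘ Fin.contractNth j (· * ·) g = Fin.contractNth j (· * ·) (φ ∘ g) := by
  funext x
  simp only [Function.comp_apply]
  rcases lt_trichotomy (x : ℕ) (j : ℕ) with h | h | h
  · rw [Fin.contractNth_apply_of_lt _ _ _ _ h, Fin.contractNth_apply_of_lt _ _ _ _ h]
    rfl
  · rw [Fin.contractNth_apply_of_eq _ _ _ _ h, Fin.contractNth_apply_of_eq _ _ _ _ h,
      map_mul]
    rfl
  · rw [Fin.contractNth_apply_of_gt _ _ _ _ h, Fin.contractNth_apply_of_gt _ _ _ _ h]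
    rfl

lemma lmapDomain_single {X Y : Type} (f : X → Y) (a : X) (b : k) :
    Finsupp.lmapDomain k k f (Finsupp.single a b) = Finsupp.single (f a) b := by
  rw [Finsupp.lmapDomain_apply, Finsupp.mapDomain_single]

lemma d_comp_lmapDomain (φ : G →* H) (n : ℕ) :
    (d k H n).comp (Finsupp.lmapDomain k k (fun g : Fin (n + 1) → G => φ ∘ g)) =
      (Finsupp.lmapDomain k k (fun g : Fin n → G => φ ∘ g)).comp (d k G n) := by
  apply Finsupp.lhom_ext
  intro g b
  have hb : (Finsupp.single g b : (Fin (n + 1) → G) →₀ k) = b • Finsupp.single g 1 := by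
    rw [Finsupp.smul_single, smul_eq_mul, mul_one]
  rw [LinearMap.comp_apply, LinearMap.comp_apply, hb, map_smul, map_smul, map_smul, map_smul]
  congr 1
  rw [lmapDomain_single, d_single, d_single, map_add, map_sum, lmapDomain_single]
  congr 1
  refine Finset.sum_congr rfl fun j _ => ?_
  rw [map_smul, lmapDomain_single, comp_contractNth]

/-- The map of inhomogeneous chain complexes induced by a group homomorphism. -/
noncomputable def chainsMap (φ : G →* H) : chainsComplex k G ⟶ chainsComplex k H where
  f n := ModuleCat.ofHom (Finsupp.lmapDomain k k (fun g : Fin n → G => φ ∘ g))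
  comm' := by
    intro i j hij
    obtain rfl : j + 1 = i := hij
    rw [chainsComplex_d, chainsComplex_d]
    exact congrArg ModuleCat.ofHom (d_comp_lmapDomain k φ j)

end InhomogeneousChains

/-- The group homology `H_n(G; k)` of a group `G` with coefficients in the trivial
module `k`, defined as the `n`-th homology of the complex of inhomogeneous chains. -/
noncomputable def groupHomologyTriv (k G : Type) [CommRing k] [Group G] (n : ℕ) :
    ModuleCat k :=
  (InhomogeneousChains.chainsComplex k G).homology n

/-- The homomorphism on group homology induced by a group homomorphism. -/
noncomputable def groupHomologyTrivMap (k : Type) [CommRing k] {G H : Type} [Group G]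
    [Group H] (φ : G →* H) (n : ℕ) : groupHomologyTriv k G n ⟶ groupHomologyTriv k H n :=
  HomologicalComplex.homologyMap (InhomogeneousChains.chainsMap k φ) n

/-- The cyclic group of order 4, written multiplicatively. -/
abbrev C4 : Type := Multiplicative (ZMod 4)

/-- The diagonal group homomorphism `ℤ/4 → ℤ/4 × ℤ/4`, `k ↦ (k, k)`. -/
def diagC4 : C4 →* C4 × C4 := (MonoidHom.id C4).prod (MonoidHom.id C4)

/-! The first projection is a retraction of the diagonal, so by functoriality `δ_*` is split
injective in every degree. -/

namespace InhomogeneousChains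

variable (k : Type) [CommRing k] {G H K : Type} [Group G] [Group H] [Group K]

lemma chainsMap_id : chainsMap k (MonoidHom.id G) = 𝟙 (chainsComplex k G) := by
  ext n x : 3
  exact Finsupp.mapDomain_id (v := x)

lemma chainsMap_comp (φ : G →* H) (ψ : H →* K) :
    chainsMap k (ψ.comp φ) = chainsMap k φ ≫ chainsMap k ψ := by
  ext n x : 3
  exact Finsupp.mapDomain_comp (v := x) (f := fun g : Fin n → G => φ ∘ g)
    (g := fun g : Fin n → H => ψ ∘ g)

end InhomogeneousChains

section Functoriality

open InhomogeneousChains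

variable (k : Type) [CommRing k] {G H K : Type} [Group G] [Group H] [Group K]

lemma groupHomologyTrivMap_id (n : ℕ) :
    groupHomologyTrivMap k (MonoidHom.id G) n = 𝟙 (groupHomologyTriv k G n) := by
  rw [groupHomologyTrivMap, chainsMap_id, HomologicalComplex.homologyMap_id]
  rfl

lemma groupHomologyTrivMap_comp (φ : G →* H) (ψ : H →* K) (n : ℕ) :
    groupHomologyTrivMap k (ψ.comp φ) n =
      groupHomologyTrivMap k φ n ≫ groupHomologyTrivMap k ψ n := by
  rw [groupHomologyTrivMap, chainsMap_comp, HomologicalComplex.homologyMap_comp]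
  rfl

lemma groupHomologyTrivMap_injective_of_leftInverse {φ : G →* H} {ψ : H →* G}
    (h : ψ.comp φ = MonoidHom.id G) (n : ℕ) :
    Function.Injective (groupHomologyTrivMap k φ n) := by
  have hsplit : groupHomologyTrivMap k φ n ≫ groupHomologyTrivMap k ψ n = 𝟙 _ := by
    rw [← groupHomologyTrivMap_comp, h, groupHomologyTrivMap_id]
  refine Function.LeftInverse.injective (g := groupHomologyTrivMap k ψ n) fun z => ?_
  simpa using congrArg (fun f => f z) hsplit

end Functoriality

/-- For every natural number `n`, the homomorphism
`δ_* : H_{2n+1}(ℤ/4; ℤ) → H_{2n+1}(ℤ/4 × ℤ/4; ℤ)` on integral group homology induced by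
the diagonal homomorphism `δ : ℤ/4 → ℤ/4 × ℤ/4`, `k ↦ (k, k)`, is injective. -/
theorem diagonal_induced_map_injective_on_odd_homology (n : ℕ) :
    Function.Injective (groupHomologyTrivMap ℤ diagC4 (2 * n + 1)) :=
  groupHomologyTrivMap_injective_of_leftInverse ℤ (MonoidHom.fst_comp_prod _ _) _
end
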